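/- arXiv:2305.09345 — 6 statements merged into one kernel-verified Lean document; each statement's English description precedes it below -/
import Mathlib

section
/- Let V be a bounded linear operator on a Hilbert space H and suppose V is regular, i.e., range(V) is closed and ker(V) ⊆ Vⁿ(H) for all n ∈ ℕ. Then V* is also regular: ker(V*) ⊆ (V*)ⁿ(H) for all n ∈ ℕ. -/
/-!
Regularity gives `ker Vⁿ ⊆ range V` for every `n`, and, since `ker V ⊆ range Vⁿ`, the closed
subspace `range Vⁿ` is saturated for the quotient map `V : H → range V`; hence every
`range Vⁿ⁺¹ = V (range Vⁿ)` is closed. For an operator `T` with closed range, the open mapping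
theorem makes `T*` bounded below on `range T`, so `range T* = T* (range T)` is closed and equals
`(ker T)ᗮ`. Therefore `ker V* = (range V)ᗮ ⊆ (ker Vⁿ)ᗮ = range (Vⁿ)* = range (V*)ⁿ`.
-/

open ContinuousLinearMap

/-- The four Penrose equations: `Vd` is the Moore–Penrose inverse of `V`. -/
def IsMoorePenrose {H : Type*} [NormedAddCommGroup H] [InnerProductSpace ℂ H]
    [CompleteSpace H] (V Vd : H →L[ℂ] H) : Prop :=
  V ∘L Vd ∘L V = V ∧ Vd ∘L V ∘L Vd = Vd ∧
    adjoint (V ∘L Vd) = V ∘L Vd ∧ adjoint (Vd ∘L V) = Vd ∘L V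

variable {H : Type*} [NormedAddCommGroup H] [InnerProductSpace ℂ H] [CompleteSpace H]

open LinearMap in
theorem Module.End.ker_pow_le_range_of_ker_le_range_pow {R M : Type*} [Ring R] [AddCommGroup M]
    [Module R M] {f : Module.End R M} (h : ∀ n : ℕ, ker f ≤ range (f ^ n)) :
    ∀ n : ℕ, ker (f ^ n) ≤ range f
  | 0 => by simp [Module.End.one_eq_id]
  | n + 1 => by
    intro x hx
    have hfx : (f ^ n) x ∈ ker f := by
      rwa [mem_ker, ← Module.End.mul_apply, ← pow_succ']
    obtain ⟨y, hy⟩ := h (n + 1) hfx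
    have hxy : x - f y ∈ ker (f ^ n) := by
      rw [mem_ker, map_sub, ← Module.End.mul_apply, ← pow_succ, hy, sub_self]
    simpa using add_mem (ker_pow_le_range_of_ker_le_range_pow h n hxy) (mem_range_self f y)

namespace ContinuousLinearMap

section Banach

variable {𝕜 E F : Type*} [NontriviallyNormedField 𝕜] [NormedAddCommGroup E] [NormedSpace 𝕜 E]
  [CompleteSpace E] [NormedAddCommGroup F] [NormedSpace 𝕜 F] [CompleteSpace F]

theorem exists_preimage_norm_le_of_isClosed_range (f : E →L[𝕜] F)
    (hf : IsClosed (f.range : Set F)) :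
    ∃ C > 0, ∀ y ∈ f.range, ∃ x, f x = y ∧ ‖x‖ ≤ C * ‖y‖ := by
  have : CompleteSpace f.range := hf.completeSpace_coe
  obtain ⟨C, hC, h⟩ :=
    f.rangeRestrict.exists_preimage_norm_le (LinearMap.surjective_rangeRestrict _)
  refine ⟨C, hC, fun y hy => ?_⟩
  obtain ⟨x, hx, hxC⟩ := h ⟨y, hy⟩
  exact ⟨x, congr_arg Subtype.val hx, hxC⟩

theorem isClosed_map_of_ker_le (f : E →L[𝕜] F) (hf : IsClosed (f.range : Set F))
    {M : Submodule 𝕜 E} (hM : IsClosed (M : Set E)) (hker : f.ker ≤ M) :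
    IsClosed (M.map (f : E →ₗ[𝕜] F) : Set F) := by
  have : CompleteSpace f.range := hf.completeSpace_coe
  have hq := f.rangeRestrict.isQuotientMap (LinearMap.surjective_rangeRestrict _)
  have hpre : f.rangeRestrict ⁻¹' (Subtype.val ⁻¹' (M.map (f : E →ₗ[𝕜] F) : Set F)) = M := by
    rw [← Set.preimage_comp]
    exact congrArg SetLike.coe (Submodule.comap_map_eq_self hker)
  have := hf.isClosedMap_subtype_val _ (hq.isCoinducing.isClosed_preimage.1 (hpre ▸ hM))
  convert this using 1
  exact (Set.image_preimage_eq_of_subset (by simp)).symm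

theorem isClosed_range_pow_of_ker_le_range_pow (V : E →L[𝕜] E) (hV : IsClosed (V.range : Set E))
    (h : ∀ n : ℕ, V.ker ≤ (V ^ n).range) : ∀ n : ℕ, IsClosed ((V ^ n).range : Set E)
  | 0 => by simp [Module.End.one_eq_id]
  | n + 1 => by
    rw [pow_succ', mul_def, toLinearMap_comp, LinearMap.range_comp]
    exact V.isClosed_map_of_ker_le hV (isClosed_range_pow_of_ker_le_range_pow V hV h n) (h n)

end Banach

section Hilbert

open scoped InnerProductSpace

variable {𝕜 E F : Type*} [RCLike 𝕜] [NormedAddCommGroup E] [InnerProductSpace 𝕜 E]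
  [CompleteSpace E] [NormedAddCommGroup F] [InnerProductSpace 𝕜 F] [CompleteSpace F]

theorem exists_norm_le_mul_norm_adjoint_of_isClosed_range (T : E →L[𝕜] F)
    (hT : IsClosed (T.range : Set F)) :
    ∃ C : NNReal, ∀ z ∈ T.range, ‖z‖ ≤ C * ‖adjoint T z‖ := by
  obtain ⟨C, hC, hpre⟩ := T.exists_preimage_norm_le_of_isClosed_range hT
  refine ⟨⟨C, hC.le⟩, fun z hz => ?_⟩
  obtain ⟨u, rfl, hu⟩ := hpre z hz
  have hsq : ‖T u‖ * ‖T u‖ ≤ ‖T u‖ * (C * ‖adjoint T (T u)‖) :=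
    calc ‖T u‖ * ‖T u‖ = RCLike.re ⟪T u, T u⟫_𝕜 := (inner_self_eq_norm_mul_norm _).symm
      _ = RCLike.re ⟪u, adjoint T (T u)⟫_𝕜 := by rw [adjoint_inner_right]
      _ ≤ ‖u‖ * ‖adjoint T (T u)‖ := (RCLike.re_le_norm _).trans (norm_inner_le_norm _ _)
      _ ≤ C * ‖T u‖ * ‖adjoint T (T u)‖ := by gcongr
      _ = ‖T u‖ * (C * ‖adjoint T (T u)‖) := by ring
  rcases (norm_nonneg (T u)).eq_or_lt with h0 | hpos
  · rw [← h0]; positivity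
  · exact le_of_mul_le_mul_left hsq hpos

theorem range_adjoint_eq_map_range (T : E →L[𝕜] F) (hT : IsClosed (T.range : Set F)) :
    (adjoint T).range = T.range.map (adjoint T : F →ₗ[𝕜] E) := by
  have : CompleteSpace T.range := hT.completeSpace_coe
  rw [← Submodule.map_top, ← T.range.sup_orthogonal_of_hasOrthogonalProjection, Submodule.map_sup,
    orthogonal_range, LinearMap.le_ker_iff_map.mp le_rfl, sup_bot_eq]

theorem isClosed_range_adjoint (T : E →L[𝕜] F) (hT : IsClosed (T.range : Set F)) :
    IsClosed ((adjoint T).range : Set E) := by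
  have : CompleteSpace T.range := hT.completeSpace_coe
  obtain ⟨C, hC⟩ := T.exists_norm_le_mul_norm_adjoint_of_isClosed_range hT
  have hanti : AntilipschitzWith C (adjoint T ∘L T.range.subtypeL) :=
    antilipschitz_of_bound _ fun z => hC z z.2
  rw [range_adjoint_eq_map_range T hT]
  have := hanti.isClosed_range (adjoint T ∘L T.range.subtypeL).uniformContinuous
  rwa [coe_comp, Set.range_comp, Submodule.coe_subtypeL, Submodule.coe_subtype,
    Subtype.range_coe] at this

theorem range_adjoint_eq_orthogonal_ker (T : E →L[𝕜] F) (hT : IsClosed (T.range : Set F)) :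
    (adjoint T).range = T.kerᗮ := by
  rw [orthogonal_ker, (isClosed_range_adjoint T hT).submodule_topologicalClosure_eq]

end Hilbert

end ContinuousLinearMap

/-- If V is regular then V* is regular. -/
theorem stmt11 (V : H →L[ℂ] H)
    (hcl : IsClosed (LinearMap.range (V : H →ₗ[ℂ] H) : Set H))
    (hreg : ∀ n : ℕ, LinearMap.ker (V : H →ₗ[ℂ] H) ≤ LinearMap.range ((V ^ n : H →L[ℂ] H) : H →ₗ[ℂ] H)) :
    ∀ n : ℕ, LinearMap.ker (adjoint V : H →ₗ[ℂ] H) ≤ LinearMap.range (((adjoint V) ^ n : H →L[ℂ] H) : H →ₗ[ℂ] H) := by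
  intro n
  have hker : (V ^ n).ker ≤ V.range := by
    simpa only [toLinearMap_pow] using
      Module.End.ker_pow_le_range_of_ker_le_range_pow (by simpa only [toLinearMap_pow] using hreg) n
  calc (adjoint V).ker = V.rangeᗮ := (orthogonal_range V).symm
    _ ≤ (V ^ n).kerᗮ := Submodule.orthogonal_le hker
    _ = (adjoint (V ^ n)).range :=
      (range_adjoint_eq_orthogonal_ker _ (isClosed_range_pow_of_ker_le_range_pow V hcl hreg n)).symm
    _ = (adjoint V ^ n).range := by rw [← star_eq_adjoint, star_pow, star_eq_adjoint]
end

section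
/- Let V be a regular bounded operator on a Hilbert space H with Moore–Penrose inverse V†. Then for every n ∈ ℕ, ker((V†)ⁿ) ∩ range(Vⁿ) = {0}, and range(Vⁿ) = { h ∈ H : Vⁿ(V†)ⁿ h = h }. -/
open ContinuousLinearMap

variable {H : Type*} [NormedAddCommGroup H] [InnerProductSpace ℂ H] [CompleteSpace H]

/-!
`(V†)ⁿ` is an inner inverse of `Vⁿ`, and for any `a, b` with `a b a = a` one has
`ker b ⊓ range a = ⊥` and `range a = {x | a (b x) = x}`. For the inner inverse property, induct on `n`:
with `y = Vⁿ x`, the vector `V† V y - y` lies in `ker V ⊆ range Vⁿ`, so `V† V y ∈ range Vⁿ` is fixed by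
`Vⁿ (V†)ⁿ`, whence `Vⁿ⁺¹ (V†)ⁿ⁺¹ Vⁿ⁺¹ x = V V† V y = V y`.
-/

namespace Module.End

variable {R M : Type*} [Ring R] [AddCommGroup M] [Module R M]

theorem mem_range_iff_apply_apply_eq {a b : End R M} (hab : a * b * a = a) (x : M) :
    x ∈ LinearMap.range a ↔ a (b x) = x := by
  refine ⟨?_, fun hx => ⟨b x, hx⟩⟩
  rintro ⟨y, rfl⟩
  exact LinearMap.congr_fun hab y

theorem ker_inf_range_eq_bot {a b : End R M} (hab : a * b * a = a) :
    LinearMap.ker b ⊓ LinearMap.range a = ⊥ := by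
  refine eq_bot_iff.mpr fun x ⟨hbx, hax⟩ => ?_
  rw [Submodule.mem_bot, ← (mem_range_iff_apply_apply_eq hab x).mp hax, LinearMap.mem_ker.mp hbx,
    map_zero]

theorem pow_mul_pow_mul_pow_eq_pow {f g : End R M} (hfgf : f * g * f = f)
    (hker : ∀ n : ℕ, LinearMap.ker f ≤ LinearMap.range (f ^ n)) (n : ℕ) :
    f ^ n * g ^ n * f ^ n = f ^ n := by
  induction n with
  | zero => simp
  | succ n ih =>
    ext x
    set y := (f ^ n) x
    have hfix : ∀ z, (f ^ n) ((g ^ n) ((f ^ n) z)) = (f ^ n) z := LinearMap.congr_fun ih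
    have hgfy : g (f y) - y ∈ LinearMap.ker f := by
      rw [LinearMap.mem_ker, map_sub, ← Module.End.mul_apply, ← Module.End.mul_apply, hfgf, sub_self]
    obtain ⟨z, hz⟩ := hker n hgfy
    have hgfy_eq : g (f y) = (f ^ n) (x + z) := by rw [map_add, hz, add_sub_cancel]
    calc (f ^ (n + 1) * g ^ (n + 1) * f ^ (n + 1)) x = f ((f ^ n) ((g ^ n) (g (f y)))) := by
          rw [pow_succ' f, pow_succ g]; rfl
      _ = f (g (f y)) := by rw [hgfy_eq, hfix]
      _ = f y := LinearMap.congr_fun hfgf y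
      _ = (f ^ (n + 1)) x := by rw [pow_succ', Module.End.mul_apply]

end Module.End

theorem stmt12_general (V Vd : H →L[ℂ] H)
    (hreg : ∀ n : ℕ, LinearMap.ker (V : H →ₗ[ℂ] H) ≤ LinearMap.range ((V ^ n : H →L[ℂ] H) : H →ₗ[ℂ] H))
    (hVd : IsMoorePenrose V Vd) :
    ∀ n : ℕ,
      LinearMap.ker ((Vd ^ n : H →L[ℂ] H) : H →ₗ[ℂ] H) ⊓ LinearMap.range ((V ^ n : H →L[ℂ] H) : H →ₗ[ℂ] H) = ⊥ ∧
      (∀ h : H, h ∈ LinearMap.range ((V ^ n : H →L[ℂ] H) : H →ₗ[ℂ] H) ↔ (V ^ n) ((Vd ^ n) h) = h) := by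
  intro n
  have hcoe : ∀ (T : H →L[ℂ] H) (k : ℕ), ((T ^ k : H →L[ℂ] H) : H →ₗ[ℂ] H) = (T : H →ₗ[ℂ] H) ^ k :=
    map_pow toLinearMapRingHom
  have hVVdV : (V : H →ₗ[ℂ] H) * Vd * V = V := congrArg ((↑) : (H →L[ℂ] H) → H →ₗ[ℂ] H) hVd.1
  have hpow := Module.End.pow_mul_pow_mul_pow_eq_pow hVVdV (fun k => hcoe V k ▸ hreg k) n
  rw [hcoe, hcoe]
  exact ⟨Module.End.ker_inf_range_eq_bot hpow,
    fun h => (Module.End.mem_range_iff_apply_apply_eq hpow h).trans (by rw [← hcoe, ← hcoe]; rfl)⟩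

/-- For regular V: ker((V†)ⁿ) ∩ range(Vⁿ) = {0} and
range(Vⁿ) = { h : Vⁿ(V†)ⁿ h = h }. -/
theorem stmt12 (V Vd : H →L[ℂ] H)
    (hcl : IsClosed (LinearMap.range (V : H →ₗ[ℂ] H) : Set H))
    (hreg : ∀ n : ℕ, LinearMap.ker (V : H →ₗ[ℂ] H) ≤ LinearMap.range ((V ^ n : H →L[ℂ] H) : H →ₗ[ℂ] H))
    (hVd : IsMoorePenrose V Vd) :
    ∀ n : ℕ,
      LinearMap.ker ((Vd ^ n : H →L[ℂ] H) : H →ₗ[ℂ] H) ⊓ LinearMap.range ((V ^ n : H →L[ℂ] H) : H →ₗ[ℂ] H) = ⊥ ∧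
      (∀ h : H, h ∈ LinearMap.range ((V ^ n : H →L[ℂ] H) : H →ₗ[ℂ] H) ↔ (V ^ n) ((Vd ^ n) h) = h) :=
  stmt12_general V Vd hreg hVd
end

section
/- Let V be a bounded operator on a Hilbert space H with closed range such that ker(V') = ker(V) for the Cauchy dual V' = (V*)†, and suppose V is left-invertible with left inverse L = (V*V)⁻¹V*. Then H decomposes as H = (closed linear span of ⋃_{n≥0} Vⁿ(E)) ⊕ (⋂_{n≥0} (L*)ⁿ H) where E = H ⊖ V H; moreover ⋂_{n≥0}(L*)ⁿH = (⋁_{n≥0}Vⁿ E)⊥. -/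
/-!
An element lies in the range of every power of the Cauchy dual `W = V (V*V)⁻¹` exactly when all its
images under powers of `V*` lie in `ran V`: since `V* W = 1` and `ran W = ran V`, peeling off one
factor `W` is the same as applying `V*` and checking membership in `ran V`. Because `ran V` is
closed it equals `E⊥`, and `(V*)ᵏ x ⊥ E` means `x ⊥ Vᵏ E`; hence `R^∞(W) = ([E]_V)⊥`, and the
decomposition is the orthogonal one of `H` along the closed subspace `[E]_V`.
-/

open ContinuousLinearMap

namespace LinearMap

variable {R M : Type*} [Semiring R] [AddCommMonoid M] [Module R M]

theorem mem_range_pow_succ_iff_of_comp_eq_id {f g : Module.End R M} (hgf : g ∘ₗ f = id)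
    (n : ℕ) (x : M) : x ∈ range (f ^ (n + 1)) ↔ x ∈ range f ∧ g x ∈ range (f ^ n) := by
  have hg : ∀ y, g (f y) = y := fun y => congrArg (· y) hgf
  constructor
  · rintro ⟨y, rfl⟩
    rw [pow_succ', Module.End.mul_apply, hg]
    exact ⟨⟨(f ^ n) y, rfl⟩, y, rfl⟩
  · rintro ⟨⟨z, rfl⟩, y, hy⟩
    rw [hg] at hy
    exact ⟨y, by rw [pow_succ', Module.End.mul_apply, hy]⟩

theorem mem_range_pow_iff_of_comp_eq_id {f g : Module.End R M} (hgf : g ∘ₗ f = id) (n : ℕ)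
    (x : M) : x ∈ range (f ^ n) ↔ ∀ k < n, (g ^ k) x ∈ range f := by
  induction n generalizing x with
  | zero => simp
  | succ n ih =>
    rw [mem_range_pow_succ_iff_of_comp_eq_id hgf, ih, Nat.forall_lt_succ_left]
    simp only [pow_zero, Module.End.one_apply, pow_succ, Module.End.mul_apply]

theorem mem_iInf_range_pow_iff_of_comp_eq_id {f g : Module.End R M} (hgf : g ∘ₗ f = id)
    (x : M) : x ∈ ⨅ n : ℕ, range (f ^ n) ↔ ∀ k, (g ^ k) x ∈ range f := by
  simp only [Submodule.mem_iInf, mem_range_pow_iff_of_comp_eq_id hgf]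
  exact ⟨fun h k => h (k + 1) k k.lt_succ_self, fun h n k _ => h k⟩

end LinearMap

theorem IsSelfAdjoint.of_mul_eq_one {M : Type*} [Monoid M] [StarMul M] {a b : M}
    (ha : IsSelfAdjoint a) (hab : a * b = 1) : IsSelfAdjoint b := by
  have hba : star b * a = 1 := by
    rw [← ha.star_eq, ← star_mul, hab, star_one]
  calc star b = star b * (a * b) := by rw [hab, mul_one]
    _ = b := by rw [← mul_assoc, hba, one_mul]

section InnerProductSpace

variable {𝕜 E : Type*} [RCLike 𝕜] [NormedAddCommGroup E] [InnerProductSpace 𝕜 E] [CompleteSpace E]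

theorem ContinuousLinearMap.mem_orthogonal_map_iff (A : E →L[𝕜] E) (S : Submodule 𝕜 E) (x : E) :
    x ∈ (S.map (A : E →ₗ[𝕜] E))ᗮ ↔ adjoint A x ∈ Sᗮ := by
  simp only [Submodule.mem_orthogonal, Submodule.mem_map, forall_exists_index, and_imp,
    forall_apply_eq_imp_iff₂, coe_coe, adjoint_inner_right]

theorem ContinuousLinearMap.mem_orthogonal_iSup_map_pow_iff (A : E →L[𝕜] E) (S : Submodule 𝕜 E)
    (x : E) : x ∈ (⨆ k : ℕ, S.map ((A ^ k : E →L[𝕜] E) : E →ₗ[𝕜] E))ᗮ ↔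
      ∀ k : ℕ, (adjoint A ^ k) x ∈ Sᗮ := by
  simp only [← Submodule.iInf_orthogonal, Submodule.mem_iInf, mem_orthogonal_map_iff,
    ← star_eq_adjoint, star_pow]

variable {V T : E →L[𝕜] E}

theorem ContinuousLinearMap.cauchyDual_eq (hT : (adjoint V ∘L V) ∘L T = 1) :
    adjoint (T ∘L adjoint V) = V ∘L T := by
  have hT_self : IsSelfAdjoint T := (IsSelfAdjoint.star_mul_self V).of_mul_eq_one hT
  rw [adjoint_comp, adjoint_adjoint, hT_self.adjoint_eq]

theorem ContinuousLinearMap.adjoint_comp_cauchyDual (hT : (adjoint V ∘L V) ∘L T = 1) :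
    adjoint V ∘L adjoint (T ∘L adjoint V) = 1 := by
  rw [cauchyDual_eq hT, ← comp_assoc, hT]

theorem ContinuousLinearMap.range_cauchyDual
    (hT₁ : T ∘L (adjoint V ∘L V) = 1) (hT₂ : (adjoint V ∘L V) ∘L T = 1) :
    LinearMap.range (adjoint (T ∘L adjoint V) : E →ₗ[𝕜] E) = LinearMap.range (V : E →ₗ[𝕜] E) := by
  rw [cauchyDual_eq hT₂]
  refine le_antisymm (LinearMap.range_comp_le_range (T : E →ₗ[𝕜] E) (V : E →ₗ[𝕜] E)) ?_
  rintro _ ⟨y, rfl⟩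
  refine ⟨(adjoint V ∘L V) y, ?_⟩
  change V ((T ∘L (adjoint V ∘L V)) y) = V y
  rw [hT₁, one_apply_eq_self]

end InnerProductSpace

variable {H : Type*} [NormedAddCommGroup H] [InnerProductSpace ℂ H] [CompleteSpace H]

theorem stmt13_general (V T : H →L[ℂ] H)
    (hcl : IsClosed (LinearMap.range (V : H →ₗ[ℂ] H) : Set H))
    (hT₁ : T ∘L (adjoint V ∘L V) = 1) (hT₂ : (adjoint V ∘L V) ∘L T = 1) :
    IsCompl
      ((⨆ n : ℕ, Submodule.map ((V ^ n : H →L[ℂ] H) : H →ₗ[ℂ] H) ((LinearMap.range (V : H →ₗ[ℂ] H))ᗮ)).topologicalClosure)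
      (⨅ n : ℕ, LinearMap.range ((adjoint (T ∘L adjoint V) ^ n : H →L[ℂ] H) : H →ₗ[ℂ] H)) ∧
    (⨅ n : ℕ, LinearMap.range ((adjoint (T ∘L adjoint V) ^ n : H →L[ℂ] H) : H →ₗ[ℂ] H)) =
      ((⨆ n : ℕ, Submodule.map ((V ^ n : H →L[ℂ] H) : H →ₗ[ℂ] H) ((LinearMap.range (V : H →ₗ[ℂ] H))ᗮ)).topologicalClosure)ᗮ := by
  have hleft : (adjoint V : H →ₗ[ℂ] H) ∘ₗ (adjoint (T ∘L adjoint V) : H →ₗ[ℂ] H) = LinearMap.id :=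
    congrArg ContinuousLinearMap.toLinearMap (adjoint_comp_cauchyDual hT₂)
  have hrange : (LinearMap.range (V : H →ₗ[ℂ] H))ᗮᗮ = LinearMap.range (V : H →ₗ[ℂ] H) := by
    rw [Submodule.orthogonal_orthogonal_eq_closure, hcl.submodule_topologicalClosure_eq]
  have hR : (⨅ n : ℕ, LinearMap.range ((adjoint (T ∘L adjoint V) ^ n : H →L[ℂ] H) : H →ₗ[ℂ] H)) =
      ((⨆ n : ℕ, Submodule.map ((V ^ n : H →L[ℂ] H) : H →ₗ[ℂ] H)
        ((LinearMap.range (V : H →ₗ[ℂ] H))ᗮ)).topologicalClosure)ᗮ := by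
    ext x
    rw [Submodule.orthogonal_closure, mem_orthogonal_iSup_map_pow_iff, hrange]
    simp only [toLinearMap_pow]
    rw [LinearMap.mem_iInf_range_pow_iff_of_comp_eq_id hleft, range_cauchyDual hT₁ hT₂]
    simp only [← toLinearMap_pow, coe_coe]
  exact ⟨hR ▸ Submodule.isCompl_orthogonal _, hR⟩

/-- Wold-type decomposition for a left-invertible V with left inverse
L = (V*V)⁻¹V*: H = [E]_V ⊕ R^∞(L*) with E = H ⊖ VH, and moreover
R^∞(L*) = ([E]_V)ᗮ. -/
theorem stmt13 (V T : H →L[ℂ] H)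
    (hcl : IsClosed (LinearMap.range (V : H →ₗ[ℂ] H) : Set H))
    (hT₁ : T ∘L (adjoint V ∘L V) = 1) (hT₂ : (adjoint V ∘L V) ∘L T = 1)
    (hker : LinearMap.ker ((adjoint (T ∘L adjoint V) : H →L[ℂ] H) : H →ₗ[ℂ] H) = LinearMap.ker (V : H →ₗ[ℂ] H)) :
    IsCompl
      ((⨆ n : ℕ, Submodule.map ((V ^ n : H →L[ℂ] H) : H →ₗ[ℂ] H) ((LinearMap.range (V : H →ₗ[ℂ] H))ᗮ)).topologicalClosure)
      (⨅ n : ℕ, LinearMap.range ((adjoint (T ∘L adjoint V) ^ n : H →L[ℂ] H) : H →ₗ[ℂ] H)) ∧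
    (⨅ n : ℕ, LinearMap.range ((adjoint (T ∘L adjoint V) ^ n : H →L[ℂ] H) : H →ₗ[ℂ] H)) =
      ((⨆ n : ℕ, Submodule.map ((V ^ n : H →L[ℂ] H) : H →ₗ[ℂ] H) ((LinearMap.range (V : H →ₗ[ℂ] H))ᗮ)).topologicalClosure)ᗮ :=
  stmt13_general V T hcl hT₁ hT₂
end

section
/- Let V be a concave bounded operator on a Hilbert space H. Then its Cauchy dual V' := V(V*V)⁻¹ is a hyponormal contraction, i.e., ‖(V')*h‖ ≤ ‖V'h‖ for all h ∈ H and ‖V'‖ ≤ 1. -/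
/-!
Concavity says that the increments `‖Vⁿ⁺¹h‖² - ‖Vⁿh‖²` decrease; since the squared norms stay
nonnegative, the first increment cannot be negative, so `V` is expansive. With `A = V*V` and
`T = A⁻¹` one has `⟪x, Tx⟫ = ‖VTx‖²`, which together with expansivity gives `‖VTx‖ ≤ ‖x‖`, and
together with concavity at `Tx` gives `‖V²Tx‖² ≤ ‖x‖² - ‖x - Tx‖² ≤ ‖x‖²`. Finally, for
`V' = VT` we have `V*V' = 1`, so `‖V'*x‖² = ⟪V*V'x, V'V'*x⟫ = ⟪V'x, VV'(V'*x)⟫ ≤ ‖V'x‖ ‖V'*x‖`.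
-/

open ContinuousLinearMap

variable {H : Type*} [NormedAddCommGroup H] [InnerProductSpace ℂ H] [CompleteSpace H]

open scoped InnerProductSpace

theorem apply_zero_le_apply_one_of_concave_of_nonneg (a : ℕ → ℝ) (hnonneg : ∀ n, 0 ≤ a n)
    (hconc : ∀ n, a (n + 2) + a n ≤ 2 * a (n + 1)) : a 0 ≤ a 1 := by
  by_contra! h
  have hdiff : ∀ n, a (n + 1) - a n ≤ a 1 - a 0 := by
    intro n
    induction n with
    | zero => exact le_rfl
    | succ n ih => linarith [hconc n]
  have hlin : ∀ n : ℕ, a n ≤ a 0 - n * (a 0 - a 1) := by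
    intro n
    induction n with
    | zero => simp
    | succ n ih => push_cast; linarith [hdiff n]
  obtain ⟨n, hn⟩ := exists_nat_gt (a 0 / (a 0 - a 1))
  rw [div_lt_iff₀ (by linarith)] at hn
  linarith [hlin n, hnonneg n]

theorem norm_le_norm_apply_of_concave {E : Type*} [SeminormedAddCommGroup E] (V : E → E)
    (hconc : ∀ h, ‖V (V h)‖ ^ 2 + ‖h‖ ^ 2 ≤ 2 * ‖V h‖ ^ 2) (h : E) : ‖h‖ ≤ ‖V h‖ := by
  have hsq := apply_zero_le_apply_one_of_concave_of_nonneg (fun n ↦ ‖V^[n] h‖ ^ 2) (fun _ ↦ by positivity)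
    fun n ↦ by simpa only [Function.iterate_succ_apply'] using hconc (V^[n] h)
  exact (sq_le_sq₀ (norm_nonneg _) (norm_nonneg _)).mp hsq

section

variable {𝕜 E : Type*} [RCLike 𝕜] [NormedAddCommGroup E] [InnerProductSpace 𝕜 E] [CompleteSpace E]

theorem norm_adjoint_apply_le_of_adjoint_comp_eq_one {V W : E →L[𝕜] E}
    (hVW : adjoint V ∘L W = 1) (hVW_le : ∀ u, ‖V (W u)‖ ≤ ‖u‖) (x : E) :
    ‖adjoint W x‖ ≤ ‖W x‖ := by
  have hx : adjoint V (W x) = x := DFunLike.congr_fun hVW x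
  have hsq : ‖adjoint W x‖ ^ 2 ≤ ‖W x‖ * ‖adjoint W x‖ := calc
    ‖adjoint W x‖ ^ 2 = RCLike.re ⟪adjoint W x, adjoint W x⟫_𝕜 := (inner_self_eq_norm_sq _).symm
    _ = RCLike.re ⟪adjoint V (W x), W (adjoint W x)⟫_𝕜 := by rw [adjoint_inner_left, hx]
    _ = RCLike.re ⟪W x, V (W (adjoint W x))⟫_𝕜 := by rw [adjoint_inner_left]
    _ ≤ ‖W x‖ * ‖V (W (adjoint W x))‖ := re_inner_le_norm _ _
    _ ≤ ‖W x‖ * ‖adjoint W x‖ := by gcongr; exact hVW_le _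
  nlinarith [norm_nonneg (W x)]

namespace CauchyDual

variable {V T : E →L[𝕜] E}

theorem re_inner_apply_eq_norm_sq (hT : (adjoint V ∘L V) ∘L T = 1) (x : E) :
    RCLike.re ⟪x, T x⟫_𝕜 = ‖V (T x)‖ ^ 2 := by
  have hx : adjoint V (V (T x)) = x := DFunLike.congr_fun hT x
  calc RCLike.re ⟪x, T x⟫_𝕜 = RCLike.re ⟪adjoint V (V (T x)), T x⟫_𝕜 := by rw [hx]
    _ = ‖V (T x)‖ ^ 2 := by rw [adjoint_inner_left, inner_self_eq_norm_sq]

theorem norm_apply_le (hexp : ∀ h, ‖h‖ ≤ ‖V h‖) (hT : (adjoint V ∘L V) ∘L T = 1) (x : E) :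
    ‖V (T x)‖ ≤ ‖x‖ := by
  have hsq : ‖V (T x)‖ ^ 2 ≤ ‖x‖ * ‖V (T x)‖ := calc
    ‖V (T x)‖ ^ 2 = RCLike.re ⟪x, T x⟫_𝕜 := (re_inner_apply_eq_norm_sq hT x).symm
    _ ≤ ‖x‖ * ‖T x‖ := re_inner_le_norm _ _
    _ ≤ ‖x‖ * ‖V (T x)‖ := by gcongr; exact hexp _
  nlinarith [norm_nonneg x]

theorem norm_apply_apply_le (hconc : ∀ h, ‖V (V h)‖ ^ 2 + ‖h‖ ^ 2 ≤ 2 * ‖V h‖ ^ 2)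
    (hT : (adjoint V ∘L V) ∘L T = 1) (x : E) : ‖V (V (T x))‖ ≤ ‖x‖ := by
  have hdist : ‖x - T x‖ ^ 2 = ‖x‖ ^ 2 - 2 * ‖V (T x)‖ ^ 2 + ‖T x‖ ^ 2 := by
    rw [norm_sub_sq (𝕜 := 𝕜), re_inner_apply_eq_norm_sq hT]
  refine (sq_le_sq₀ (norm_nonneg _) (norm_nonneg _)).mp ?_
  nlinarith [hconc (T x), sq_nonneg ‖x - T x‖]

end CauchyDual

end

theorem stmt17_general (V T : H →L[ℂ] H)
    (hconc : ∀ h : H, ‖V (V h)‖ ^ 2 + ‖h‖ ^ 2 ≤ 2 * ‖V h‖ ^ 2)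
    (hT₂ : (adjoint V ∘L V) ∘L T = 1) :
    (∀ h : H, ‖adjoint (V ∘L T) h‖ ≤ ‖(V ∘L T) h‖) ∧ ‖V ∘L T‖ ≤ 1 := by
  have hexp : ∀ h, ‖h‖ ≤ ‖V h‖ := norm_le_norm_apply_of_concave V hconc
  have hdual : adjoint V ∘L (V ∘L T) = 1 := by rw [← comp_assoc, hT₂]
  refine ⟨norm_adjoint_apply_le_of_adjoint_comp_eq_one hdual
    (CauchyDual.norm_apply_apply_le hconc hT₂), ?_⟩
  exact opNorm_le_bound _ zero_le_one fun x ↦ by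
    simpa using CauchyDual.norm_apply_le hexp hT₂ x

/-- The Cauchy dual V' = V(V*V)⁻¹ of a concave operator is a hyponormal
contraction. -/
theorem stmt17 (V T : H →L[ℂ] H)
    (hconc : ∀ h : H, ‖V (V h)‖ ^ 2 + ‖h‖ ^ 2 ≤ 2 * ‖V h‖ ^ 2)
    (hT₁ : T ∘L (adjoint V ∘L V) = 1) (hT₂ : (adjoint V ∘L V) ∘L T = 1) :
    (∀ h : H, ‖adjoint (V ∘L T) h‖ ≤ ‖(V ∘L T) h‖) ∧ ‖V ∘L T‖ ≤ 1 :=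
  stmt17_general V T hconc hT₂
end

section
/- Let V be a bounded operator on a Hilbert space H satisfying ‖Vk + h‖² ≤ 2(‖k‖² + ‖Vh‖²) for all h, k ∈ H. Then V is left-invertible and V is a hyponormal contraction. -/
/-!
Testing the hypothesis on `((t : 𝕜) • h, k)` for real `t` and taking the discriminant gives
`(re ⟪V k, h⟫)² ≤ (2‖k‖² - ‖V k‖²) (2‖V h‖² - ‖h‖²)`. For `h = V k` this becomes
`‖V‖² ‖V k‖² ≤ (2‖V‖² - 1) ‖k‖²`, so `‖V‖⁴ ≤ 2‖V‖² - 1`, i.e. `‖V‖ ≤ 1`.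
The case `k = 0` says that `V` is bounded below, so `V* V` is invertible.

For hyponormality, write `h = (2 - V V*) y` and test the hypothesis on `(h, V* y)` (the minimiser
of the quadratic form in `k`): since `V V* y + h = 2 y`, this gives `2‖y‖² - ‖V* y‖² ≤ ‖V h‖²`.
On the other hand `2‖y‖² - ‖V* y‖² - ‖V* h‖² = 2‖u‖² - ‖V* u‖² ≥ 0` with `u = (1 - V V*) y`,
because `V*` is a contraction.
-/

open ContinuousLinearMap

variable {H : Type*} [NormedAddCommGroup H] [InnerProductSpace ℂ H] [CompleteSpace H]

open RCLike NNReal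

lemma ContinuousLinearMap.sq_opNorm_le_of_forall {𝕜 E F : Type*} [NontriviallyNormedField 𝕜]
    [SeminormedAddCommGroup E] [SeminormedAddCommGroup F] [NormedSpace 𝕜 E] [NormedSpace 𝕜 F]
    (f : E →L[𝕜] F) {M : ℝ} (hM : 0 ≤ M) (h : ∀ x, ‖f x‖ ^ 2 ≤ M * ‖x‖ ^ 2) :
    ‖f‖ ^ 2 ≤ M := by
  have hf : ‖f‖ ≤ √M := opNorm_le_bound f (Real.sqrt_nonneg M) fun x => by
    rw [← Real.sqrt_sq (norm_nonneg (f x)), ← Real.sqrt_sq (norm_nonneg x), ← Real.sqrt_mul hM]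
    exact Real.sqrt_le_sqrt (h x)
  simpa [Real.sq_sqrt hM] using pow_le_pow_left₀ (norm_nonneg f) hf 2

lemma norm_add_ofReal_smul_sq {𝕜 E : Type*} [RCLike 𝕜] [NormedAddCommGroup E]
    [InnerProductSpace 𝕜 E] (x y : E) (t : ℝ) :
    ‖x + (t : 𝕜) • y‖ ^ 2 = ‖x‖ ^ 2 + 2 * t * re (inner 𝕜 x y) + t ^ 2 * ‖y‖ ^ 2 := by
  rw [norm_add_sq (𝕜 := 𝕜), inner_smul_real_right, norm_smul, norm_ofReal, mul_pow, sq_abs,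
    real_smul_eq_coe_mul, re_ofReal_mul]
  ring

namespace ContinuousLinearMap

variable {𝕜 E : Type*} [RCLike 𝕜] [NormedAddCommGroup E] [InnerProductSpace 𝕜 E]

section

variable {V : E →L[𝕜] E}

lemma norm_sq_le_two_mul_norm_apply_sq
    (hV : ∀ h k : E, ‖V k + h‖ ^ 2 ≤ 2 * (‖k‖ ^ 2 + ‖V h‖ ^ 2)) (h : E) :
    ‖h‖ ^ 2 ≤ 2 * ‖V h‖ ^ 2 := by
  simpa using hV h 0

lemma norm_apply_sq_le_two_mul_norm_sq
    (hV : ∀ h k : E, ‖V k + h‖ ^ 2 ≤ 2 * (‖k‖ ^ 2 + ‖V h‖ ^ 2)) (k : E) :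
    ‖V k‖ ^ 2 ≤ 2 * ‖k‖ ^ 2 := by
  simpa using hV 0 k

lemma re_inner_apply_sq_le (hV : ∀ h k : E, ‖V k + h‖ ^ 2 ≤ 2 * (‖k‖ ^ 2 + ‖V h‖ ^ 2))
    (h k : E) :
    re (inner 𝕜 (V k) h) ^ 2 ≤ (2 * ‖k‖ ^ 2 - ‖V k‖ ^ 2) * (2 * ‖V h‖ ^ 2 - ‖h‖ ^ 2) := by
  have hquad : ∀ t : ℝ, 0 ≤ (2 * ‖V h‖ ^ 2 - ‖h‖ ^ 2) * (t * t)
      + (-2 * re (inner 𝕜 (V k) h)) * t + (2 * ‖k‖ ^ 2 - ‖V k‖ ^ 2) := fun t => by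
    have := hV ((t : 𝕜) • h) k
    rw [map_smul, norm_add_ofReal_smul_sq, norm_smul, norm_ofReal, mul_pow, sq_abs] at this
    linarith
  have := discrim_le_zero hquad
  rw [discrim] at this
  linarith

lemma opNorm_sq_mul_norm_apply_sq_le
    (hV : ∀ h k : E, ‖V k + h‖ ^ 2 ≤ 2 * (‖k‖ ^ 2 + ‖V h‖ ^ 2)) (k : E) :
    ‖V‖ ^ 2 * ‖V k‖ ^ 2 ≤ (2 * ‖V‖ ^ 2 - 1) * ‖k‖ ^ 2 := by
  have hk := re_inner_apply_sq_le hV (V k) k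
  rw [inner_self_eq_norm_sq] at hk
  have hVVk : ‖V (V k)‖ ^ 2 ≤ ‖V‖ ^ 2 * ‖V k‖ ^ 2 := by
    simpa [mul_pow] using pow_le_pow_left₀ (norm_nonneg _) (le_opNorm V (V k)) 2
  have h₁ := norm_apply_sq_le_two_mul_norm_sq hV k
  have h₂ := norm_sq_le_two_mul_norm_apply_sq hV k
  rcases (sq_nonneg ‖V k‖).eq_or_lt with hVk | hVk
  · rw [← hVk] at h₂ ⊢
    nlinarith
  · have : ‖V k‖ ^ 2 * (‖V‖ ^ 2 * ‖V k‖ ^ 2 - (2 * ‖V‖ ^ 2 - 1) * ‖k‖ ^ 2) ≤ 0 := by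
      nlinarith [mul_le_mul_of_nonneg_left hVVk (sub_nonneg.mpr h₁)]
    nlinarith

lemma opNorm_le_one (hV : ∀ h k : E, ‖V k + h‖ ^ 2 ≤ 2 * (‖k‖ ^ 2 + ‖V h‖ ^ 2)) : ‖V‖ ≤ 1 := by
  by_contra! hV₁
  have hV₁' : 1 < ‖V‖ ^ 2 := one_lt_pow₀ hV₁ two_ne_zero
  have hpos : 0 < ‖V‖ ^ 2 := by positivity
  have := V.sq_opNorm_le_of_forall (M := (2 * ‖V‖ ^ 2 - 1) / ‖V‖ ^ 2)
    (div_nonneg (by linarith) hpos.le) fun k => by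
      rw [div_mul_eq_mul_div, le_div_iff₀ hpos]
      linarith [opNorm_sq_mul_norm_apply_sq_le hV k]
  rw [le_div_iff₀ hpos] at this
  nlinarith

end

variable [CompleteSpace E]

lemma exists_leftInverse_of_forall_le_norm_apply (V : E →L[𝕜] E) {c : ℝ≥0}
    (hc : 0 < c) (h : ∀ x, ‖x‖ ^ 2 * c ≤ ‖V x‖ ^ 2) : ∃ L : E →L[𝕜] E, L ∘L V = 1 := by
  obtain ⟨u, hu⟩ : IsUnit (adjoint V ∘L V) := isUnit_of_forall_le_norm_inner_map _ hc fun x => by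
    rw [comp_apply, adjoint_inner_left, inner_self_eq_norm_sq_to_K, norm_pow, norm_ofReal,
      abs_norm]
    exact h x
  refine ⟨↑u⁻¹ ∘L adjoint V, ?_⟩
  rw [comp_assoc, ← hu]
  exact u.inv_mul

lemma norm_adjoint_apply_le_of_norm_le_one {V : E →L[𝕜] E} (hV : ‖V‖ ≤ 1) (x : E) :
    ‖adjoint V x‖ ≤ ‖x‖ := by
  simpa using le_of_opNorm_le _ ((adjoint.norm_map V).trans_le hV) x

lemma surjective_two_smul_sub_comp_adjoint {V : E →L[𝕜] E} (hV : ‖V‖ ≤ 1) :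
    Function.Surjective ((2 : 𝕜) • (1 : E →L[𝕜] E) - V ∘L adjoint V) := by
  refine (isUnit_iff_bijective.mp (isUnit_of_forall_le_norm_inner_map _ one_pos fun x => ?_)).2
  have hx : inner 𝕜 (((2 : 𝕜) • (1 : E →L[𝕜] E) - V ∘L adjoint V) x) x
      = ((2 * ‖x‖ ^ 2 - ‖adjoint V x‖ ^ 2 : ℝ) : 𝕜) := by
    rw [sub_apply, inner_sub_left, smul_apply, one_apply_eq_self, inner_smul_left, comp_apply,
      ← adjoint_inner_right, inner_self_eq_norm_sq_to_K, inner_self_eq_norm_sq_to_K]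
    simp [map_ofNat]
  rw [hx, norm_ofReal, NNReal.coe_one, mul_one]
  nlinarith [le_abs_self (2 * ‖x‖ ^ 2 - ‖adjoint V x‖ ^ 2),
    pow_le_pow_left₀ (norm_nonneg _) (norm_adjoint_apply_le_of_norm_le_one hV x) 2]

lemma norm_adjoint_sq_add_eq (V : E →L[𝕜] E) (y : E) :
    ‖adjoint V ((2 : 𝕜) • y - V (adjoint V y))‖ ^ 2
      + (2 * ‖y - V (adjoint V y)‖ ^ 2 - ‖adjoint V (y - V (adjoint V y))‖ ^ 2)
      = 2 * ‖y‖ ^ 2 - ‖adjoint V y‖ ^ 2 := by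
  set w := adjoint V y with hw_def
  have hw : re (inner 𝕜 w (adjoint V (V w))) = ‖V w‖ ^ 2 := by
    rw [adjoint_inner_right, inner_self_eq_norm_sq]
  have hy : re (inner 𝕜 y (V w)) = ‖w‖ ^ 2 := by
    rw [← adjoint_inner_left, inner_self_eq_norm_sq]
  clear_value w
  rw [map_sub, map_sub, map_smul, ← hw_def, norm_sub_sq (𝕜 := 𝕜), norm_sub_sq (𝕜 := 𝕜),
    norm_sub_sq (𝕜 := 𝕜), inner_smul_left, norm_smul, hy]
  simp only [norm_ofNat, map_ofNat, mul_re, ofNat_re, ofNat_im, zero_mul, sub_zero, hw]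
  ring

lemma norm_adjoint_apply_le_norm_apply {V : E →L[𝕜] E}
    (hV : ∀ h k : E, ‖V k + h‖ ^ 2 ≤ 2 * (‖k‖ ^ 2 + ‖V h‖ ^ 2)) (h : E) :
    ‖adjoint V h‖ ≤ ‖V h‖ := by
  obtain ⟨y, rfl⟩ := surjective_two_smul_sub_comp_adjoint (opNorm_le_one hV) h
  simp only [sub_apply, smul_apply, one_apply_eq_self, comp_apply]
  have hy := hV ((2 : 𝕜) • y - V (adjoint V y)) (adjoint V y)
  rw [add_sub_cancel, norm_smul, RCLike.norm_ofNat] at hy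
  have hu := norm_adjoint_apply_le_of_norm_le_one (opNorm_le_one hV) (y - V (adjoint V y))
  have := norm_adjoint_sq_add_eq V y
  refine (pow_le_pow_iff_left₀ (norm_nonneg _) (norm_nonneg _) two_ne_zero).mp ?_
  nlinarith [pow_le_pow_left₀ (norm_nonneg _) hu 2]

end ContinuousLinearMap

/-- If ‖Vk + h‖² ≤ 2(‖k‖² + ‖Vh‖²) for all h, k, then V is left-invertible
and a hyponormal contraction. -/
theorem stmt18 (V : H →L[ℂ] H)
    (hyp : ∀ h k : H, ‖V k + h‖ ^ 2 ≤ 2 * (‖k‖ ^ 2 + ‖V h‖ ^ 2)) :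
    (∃ L : H →L[ℂ] H, L ∘L V = 1) ∧
    (∀ h : H, ‖adjoint V h‖ ≤ ‖V h‖) ∧ ‖V‖ ≤ 1 := by
  refine ⟨V.exists_leftInverse_of_forall_le_norm_apply (c := 1 / 2) (by norm_num) fun x => ?_,
    norm_adjoint_apply_le_norm_apply hyp, opNorm_le_one hyp⟩
  have := norm_sq_le_two_mul_norm_apply_sq hyp x
  push_cast
  linarith
end

section
/- Let V be a bounded operator on a Hilbert space H with closed range such that V^i(V^i)* maps ker V into ker V for all 1 ≤ i ≤ n. Then range(V^{i+1}) is closed for all 1 ≤ i ≤ n. -/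
open ContinuousLinearMap

variable {H : Type*} [NormedAddCommGroup H] [InnerProductSpace ℂ H] [CompleteSpace H]


local notation "⟪" x ", " y "⟫" => @inner ℂ _ _ x y

/-- The restriction of `W` to `(ker W)ᗮ`, as an equivalence onto its (closed) range. -/
noncomputable def restrEquiv (W : H →L[ℂ] H) (h : IsClosed (LinearMap.range (W : H →ₗ[ℂ] H) : Set H)) :
    ((LinearMap.ker (W : H →ₗ[ℂ] H))ᗮ : Submodule ℂ H) ≃L[ℂ] (LinearMap.range (W : H →ₗ[ℂ] H) : Submodule ℂ H) := by
  haveI : CompleteSpace (LinearMap.range (W : H →ₗ[ℂ] H) : Submodule ℂ H) := h.completeSpace_coe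
  refine ContinuousLinearEquiv.ofBijective
    ((W.comp (LinearMap.ker (W : H →ₗ[ℂ] H))ᗮ.subtypeL).codRestrict (LinearMap.range (W : H →ₗ[ℂ] H))
      (fun x => LinearMap.mem_range_self _ _)) ?_ ?_
  · rw [Submodule.eq_bot_iff]
    rintro ⟨x, hx⟩ hx0
    have : x ∈ LinearMap.ker (W : H →ₗ[ℂ] H) := by
      exact LinearMap.mem_ker.mpr (congrArg Subtype.val (LinearMap.mem_ker.mp hx0))
    have hb : x ∈ (LinearMap.ker (W : H →ₗ[ℂ] H) ⊓ (LinearMap.ker (W : H →ₗ[ℂ] H))ᗮ : Submodule ℂ H) := ⟨this, hx⟩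
    rw [(LinearMap.ker (W : H →ₗ[ℂ] H)).inf_orthogonal_eq_bot] at hb
    simpa using hb
  · rw [LinearMap.range_eq_top]
    rintro ⟨w, hw⟩
    obtain ⟨u, rfl⟩ := hw
    haveI : CompleteSpace (LinearMap.ker (W : H →ₗ[ℂ] H)) := W.isClosed_ker.completeSpace_coe
    obtain ⟨k, hk, k', hk', rfl⟩ := (LinearMap.ker (W : H →ₗ[ℂ] H)).exists_add_mem_mem_orthogonal u
    refine ⟨⟨k', hk'⟩, ?_⟩
    ext
    simp [ContinuousLinearMap.coe_coe, ContinuousLinearMap.coe_codRestrict_apply, (show W k = 0 from LinearMap.mem_ker.mp hk)]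
    rfl

lemma restrEquiv_apply (W : H →L[ℂ] H) (h : IsClosed (LinearMap.range (W : H →ₗ[ℂ] H) : Set H))
    (x : ((LinearMap.ker (W : H →ₗ[ℂ] H))ᗮ : Submodule ℂ H)) : (restrEquiv W h x : H) = W x := rfl

lemma image_closed (V : H →L[ℂ] H) (hcl : IsClosed (LinearMap.range (V : H →ₗ[ℂ] H) : Set H))
    (A : Submodule ℂ H) (hA : IsClosed (A : Set H)) (hle : A ≤ (LinearMap.ker (V : H →ₗ[ℂ] H))ᗮ) :
    IsClosed (V '' (A : Set H)) := by
  haveI : CompleteSpace A := hA.completeSpace_coe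
  set e := restrEquiv V hcl with he
  obtain ⟨c, hc⟩ : ∃ c, AntilipschitzWith c e := ⟨_, e.antilipschitz⟩
  set f : A →L[ℂ] H := V.comp A.subtypeL with hf
  have hfa : AntilipschitzWith c f := by
    apply ContinuousLinearMap.antilipschitz_of_bound
    intro x
    have h1 : ‖x‖ = ‖((⟨(x : H), hle x.2⟩ : ((LinearMap.ker (V : H →ₗ[ℂ] H))ᗮ : Submodule ℂ H)) : H)‖ := rfl
    have h2 := hc.le_mul_dist (⟨(x : H), hle x.2⟩ : ((LinearMap.ker (V : H →ₗ[ℂ] H))ᗮ : Submodule ℂ H)) 0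
    simp only [dist_zero_right, map_zero] at h2
    calc ‖x‖ = ‖(⟨(x : H), hle x.2⟩ : ((LinearMap.ker (V : H →ₗ[ℂ] H))ᗮ : Submodule ℂ H))‖ := rfl
    _ ≤ c * ‖e ⟨(x : H), hle x.2⟩‖ := h2
    _ = c * ‖f x‖ := rfl
  have := hfa.isClosed_range f.uniformContinuous
  have hrg : Set.range f = V '' (A : Set H) := by
    ext y
    constructor
    · rintro ⟨a, rfl⟩; exact ⟨a, a.2, rfl⟩
    · rintro ⟨a, ha, rfl⟩; exact ⟨⟨a, ha⟩, rfl⟩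
  rwa [hrg] at this

lemma orthogonal_ker_le_range_adjoint (W : H →L[ℂ] H)
    (h : IsClosed (LinearMap.range (W : H →ₗ[ℂ] H) : Set H)) :
    ((LinearMap.ker (W : H →ₗ[ℂ] H))ᗮ : Submodule ℂ H) ≤ LinearMap.range ((adjoint W : H →L[ℂ] H) : H →ₗ[ℂ] H) := by
  haveI : CompleteSpace (LinearMap.range (W : H →ₗ[ℂ] H) : Submodule ℂ H) := h.completeSpace_coe
  haveI : CompleteSpace (LinearMap.ker (W : H →ₗ[ℂ] H)) := W.isClosed_ker.completeSpace_coe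
  set e := restrEquiv W h with he
  intro y hy
  -- the functional  u ↦ ⟪y, e.symm (P_range u)⟫
  set f : H →L[ℂ] ℂ :=
    (innerSL ℂ y).comp (((LinearMap.ker (W : H →ₗ[ℂ] H))ᗮ.subtypeL.comp
      (e.symm : (LinearMap.range (W : H →ₗ[ℂ] H) : Submodule ℂ H) →L[ℂ] ((LinearMap.ker (W : H →ₗ[ℂ] H))ᗮ : Submodule ℂ H))).comp
      (Submodule.orthogonalProjectionOnto (LinearMap.range (W : H →ₗ[ℂ] H)))) with hfdef
  set z := (InnerProductSpace.toDual ℂ H).symm f with hz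
  have hzf : ∀ u, ⟪z, u⟫ = f u := fun u => by
    have := (InnerProductSpace.toDual ℂ H).apply_symm_apply f
    rw [hz, ← this]
    simp [InnerProductSpace.toDual_apply_apply]
  refine ⟨z, ?_⟩
  apply ext_inner_right ℂ
  intro u
  rw [ContinuousLinearMap.coe_coe, ContinuousLinearMap.adjoint_inner_left, hzf]
  obtain ⟨k, hk, k', hk', rfl⟩ := (LinearMap.ker (W : H →ₗ[ℂ] H)).exists_add_mem_mem_orthogonal u
  have hWu : W (k + k') = (e ⟨k', hk'⟩ : H) := by
    rw [restrEquiv_apply]; simp [(show W k = 0 from LinearMap.mem_ker.mp hk)]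
  have hPW : Submodule.orthogonalProjectionOnto (LinearMap.range (W : H →ₗ[ℂ] H)) (W (k + k')) = e ⟨k', hk'⟩ := by
    have : W (k + k') = ((e ⟨k', hk'⟩ : (LinearMap.range (W : H →ₗ[ℂ] H) : Submodule ℂ H)) : H) := hWu
    rw [this, Submodule.orthogonalProjectionOnto_mem_subspace_eq_self]
  have : f (W (k + k')) = ⟪y, k'⟫ := by
    simp only [hfdef, ContinuousLinearMap.comp_apply, hPW, ContinuousLinearEquiv.coe_coe,
      ContinuousLinearEquiv.symm_apply_apply, innerSL_apply_apply]
    rfl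
  rw [this, inner_add_right]
  have : ⟪y, k⟫ = 0 := by
    have := hy k hk
    rwa [← inner_conj_symm, map_eq_zero] at this
  rw [this, zero_add]

lemma range_comp_adjoint (W : H →L[ℂ] H) (h : IsClosed (LinearMap.range (W : H →ₗ[ℂ] H) : Set H)) :
    LinearMap.range ((W ∘L adjoint W : H →L[ℂ] H) : H →ₗ[ℂ] H) = LinearMap.range (W : H →ₗ[ℂ] H) := by
  haveI : CompleteSpace (LinearMap.ker (W : H →ₗ[ℂ] H)) := W.isClosed_ker.completeSpace_coe
  apply le_antisymm
  · rintro x ⟨u, rfl⟩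
    exact ⟨adjoint W u, rfl⟩
  · rintro x ⟨u, rfl⟩
    obtain ⟨k, hk, k', hk', rfl⟩ := (LinearMap.ker (W : H →ₗ[ℂ] H)).exists_add_mem_mem_orthogonal u
    obtain ⟨v, hv⟩ := orthogonal_ker_le_range_adjoint W h hk'
    refine ⟨v, ?_⟩
    rw [ContinuousLinearMap.coe_coe] at hv
    simp [hv, (show W k = 0 from LinearMap.mem_ker.mp hk)]

lemma selfadj_inv_orthogonal (S : H →L[ℂ] H) (hS : IsSelfAdjoint S)
    (K : Submodule ℂ H) (hK : ∀ k ∈ K, S k ∈ K) :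
    ∀ y ∈ Kᗮ, S y ∈ Kᗮ := by
  intro y hy u hu
  have h1 : ⟪u, S y⟫ = ⟪S u, y⟫ := by
    rw [← ContinuousLinearMap.adjoint_inner_left, hS.adjoint_eq]
  rw [h1]
  exact hy (S u) (hK u hu)


/-- If VⁱV*ⁱ leaves ker V invariant for all 1 ≤ i ≤ n, then range(V^(i+1))
is closed for all 1 ≤ i ≤ n. -/
theorem stmt19 (V : H →L[ℂ] H) (n : ℕ)
    (hcl : IsClosed (LinearMap.range (V : H →ₗ[ℂ] H) : Set H))
    (hinv : ∀ i : ℕ, 1 ≤ i → i ≤ n →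
      ∀ h ∈ LinearMap.ker (V : H →ₗ[ℂ] H), ((V ^ i) ∘L ((adjoint V) ^ i)) h ∈ LinearMap.ker (V : H →ₗ[ℂ] H)) :
    ∀ i : ℕ, 1 ≤ i → i ≤ n → IsClosed (LinearMap.range ((V ^ (i + 1) : H →L[ℂ] H) : H →ₗ[ℂ] H) : Set H) := by
  haveI : CompleteSpace (LinearMap.ker (V : H →ₗ[ℂ] H)) := V.isClosed_ker.completeSpace_coe
  have hadj : ∀ j : ℕ, (adjoint V) ^ j = adjoint (V ^ j) := fun j => by
    rw [← star_eq_adjoint, ← star_eq_adjoint, star_pow]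
  have claim : ∀ i : ℕ, i ≤ n → IsClosed (LinearMap.range ((V ^ (i + 1) : H →L[ℂ] H) : H →ₗ[ℂ] H) : Set H) := by
    intro i
    induction i with
    | zero => intro _; simpa [pow_one] using hcl
    | succ i IH =>
      intro hin
      have hM : IsClosed (LinearMap.range ((V ^ (i + 1) : H →L[ℂ] H) : H →ₗ[ℂ] H) : Set H) := IH (by omega)
      set W := V ^ (i + 1) with hW
      set S := W ∘L adjoint W with hS
      have hSK : ∀ k ∈ LinearMap.ker (V : H →ₗ[ℂ] H), S k ∈ LinearMap.ker (V : H →ₗ[ℂ] H) := by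
        intro k hk
        have := hinv (i + 1) (by omega) hin k hk
        rwa [hadj (i + 1)] at this
      have hSadj : IsSelfAdjoint S := by
        rw [IsSelfAdjoint, star_eq_adjoint, hS, ContinuousLinearMap.adjoint_comp,
          ContinuousLinearMap.adjoint_adjoint]
      have hSKperp := selfadj_inv_orthogonal S hSadj (LinearMap.ker (V : H →ₗ[ℂ] H)) hSK
      set A : Submodule ℂ H := LinearMap.range (W : H →ₗ[ℂ] H) ⊓ (LinearMap.ker (V : H →ₗ[ℂ] H))ᗮ with hA
      have hAc : IsClosed (A : Set H) := by
        rw [hA, Submodule.coe_inf]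
        exact hM.inter (LinearMap.ker (V : H →ₗ[ℂ] H)).isClosed_orthogonal
      have hVA : IsClosed (V '' (A : Set H)) := image_closed V hcl A hAc inf_le_right
      have hrS : LinearMap.range (S : H →ₗ[ℂ] H) = LinearMap.range (W : H →ₗ[ℂ] H) := range_comp_adjoint W hM
      have hkey : (LinearMap.range ((V ^ (i + 1 + 1) : H →L[ℂ] H) : H →ₗ[ℂ] H) : Set H) = V '' (A : Set H) := by
        ext x
        constructor
        · rintro ⟨u, rfl⟩
          have hx : (V ^ (i + 1 + 1)) u = V (W u) := by
            rw [pow_succ']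
            rfl
          rw [ContinuousLinearMap.coe_coe, hx]
          have : W u ∈ LinearMap.range (S : H →ₗ[ℂ] H) := by rw [hrS]; exact ⟨u, rfl⟩
          obtain ⟨w, hw⟩ := this
          obtain ⟨k, hk, k', hk', rfl⟩ := (LinearMap.ker (V : H →ₗ[ℂ] H)).exists_add_mem_mem_orthogonal w
          have hWu : W u = S k + S k' := by rw [← hw, map_add]; rfl
          refine ⟨S k', ⟨?_, hSKperp k' hk'⟩, ?_⟩
          · rw [← hrS]; exact ⟨k', rfl⟩
          · rw [hWu, map_add, (show V (S k) = 0 from LinearMap.mem_ker.mp (hSK k hk)), zero_add]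
        · rintro ⟨a, ⟨⟨u, rfl⟩, _⟩, rfl⟩
          refine ⟨u, ?_⟩
          rw [pow_succ']
          rfl
      rw [hkey]
      exact hVA
  intro i _ hin
  exact claim i hin
end
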